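/- Let P be a poset, W a topological space, and {X_p | p ∈ P} a semi-trim P-partition of W. Then: (i) if A ⊆ W is compact and either A is open or T(A) is a lower set, then there is a finite subset F ⊆ T(A) such that every element of T(A) lies above some element of F; (ii) if W is compact, then P has a finite foundation; (iii) if the closure of X_p is compact, then the singleton {p} has a finite foundation in P (i.e. p ∈ P_Δ). -/

import Mathlib

/-!
Cover a compact set `A` by finitely many trim neighbourhoods of its points. Every point of
`A ∩ X q` lies in one of them, and the label of a trim set lies below every element of its type,
so the finitely many labels of the cover lie below all of `T(A)`. If `A` is open the cover can be
taken inside `A`, so the labels lie in `T(A)`; if `T(A)` is a lower set, the labels lying below an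
element of `T(A)` already lie in it. For `A = closure (X p)` every `X r` with `r ≤ p` meets `A`,
since a trim neighbourhood of a point of `X r` has a label `≤ r ≤ p` and therefore meets `X p`.
-/

open Set

variable {P W : Type*} [PartialOrder P] [TopologicalSpace W]

/-- The type of a subset `Y` with respect to the family `X`. -/
def ptype (X : P → Set W) (Y : Set W) : Set P :=
  {p | (Y ∩ X p).Nonempty}

/-- `A` is a `p`-trim set: an open set whose type is exactly `{q | p ≤ q}`. -/
def IsTrimSet (X : P → Set W) (p : P) (A : Set W) : Prop :=
  IsOpen A ∧ ptype X A = Ici p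

/-- `P̂`: the set of labels `p` for which a `p`-trim set exists. -/
def trimHat (X : P → Set W) : Set P :=
  {p | ∃ A, IsTrimSet X p A}

/-- A `P`-partition: a pairwise disjoint family of nonempty subsets. -/
structure IsPPartition (X : P → Set W) : Prop where
  nonempty : ∀ p, (X p).Nonempty
  pairwise_disjoint : Pairwise fun p q => Disjoint (X p) (X q)

/-- A semi-trim `P`-partition. -/
structure IsSemiTrim (X : P → Set W) extends IsPPartition X : Prop where
  nhds_base : ∀ w : W, ∀ U ∈ nhds w, ∃ p A, IsTrimSet X p A ∧ w ∈ A ∧ A ⊆ U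
  trim_dense : ∀ A : Set W, IsOpen A → ∀ p ∈ ptype X A ∩ trimHat X,
    ∃ B ⊆ A, IsTrimSet X p B
  label_sup : ∀ p, ∀ x ∈ X p, IsLUB {q | ∃ A, IsTrimSet X q A ∧ x ∈ A} p
  full : ∀ p : P, ∀ w : W,
    (∀ U ∈ nhds w, ∃ A, IsTrimSet X p A ∧ w ∈ A ∧ A ⊆ U) → w ∈ X p

/-- `F` is a finite foundation of `Q` in the poset `P`. -/
def IsFinFoundation (Q F : Set P) : Prop :=
  F.Finite ∧ (∀ q ∈ Q, ∀ r ≤ q, ∃ p ∈ F, p ≤ r) ∧ (∀ p ∈ F, ∃ q ∈ Q, p ≤ q)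

open Topology

variable {X : P → Set W}

def HasTrimNhdBasis (X : P → Set W) : Prop :=
  ∀ w : W, ∀ U ∈ 𝓝 w, ∃ p A, IsTrimSet X p A ∧ w ∈ A ∧ A ⊆ U

lemma IsSemiTrim.hasTrimNhdBasis (h : IsSemiTrim X) : HasTrimNhdBasis X :=
  h.nhds_base

omit [PartialOrder P] [TopologicalSpace W] in
lemma ptype_mono {Y Z : Set W} (hYZ : Y ⊆ Z) : ptype X Y ⊆ ptype X Z :=
  fun _ hq => hq.mono (inter_subset_inter_left _ hYZ)

omit [PartialOrder P] [TopologicalSpace W] in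
lemma ptype_univ (hX : ∀ p, (X p).Nonempty) : ptype X univ = univ :=
  eq_univ_of_forall fun p => by simpa [ptype] using hX p

namespace IsTrimSet

variable {p q : P} {B : Set W}

lemma mem_ptype_iff (hB : IsTrimSet X p B) : q ∈ ptype X B ↔ p ≤ q := by
  rw [hB.2, mem_Ici]

lemma self_mem_ptype (hB : IsTrimSet X p B) : p ∈ ptype X B :=
  hB.mem_ptype_iff.2 le_rfl

lemma le_of_inter_nonempty (hB : IsTrimSet X p B) (hq : (B ∩ X q).Nonempty) : p ≤ q :=
  hB.mem_ptype_iff.1 hq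

end IsTrimSet

lemma HasTrimNhdBasis.exists_finite_labels_le (hb : HasTrimNhdBasis X) {A U : Set W}
    (hA : IsCompact A) (hU : IsOpen U) (hAU : A ⊆ U) :
    ∃ F : Set P, F.Finite ∧
      (∀ p ∈ F, ∃ C, IsTrimSet X p C ∧ C ⊆ U ∧ (C ∩ A).Nonempty) ∧
      ∀ q ∈ ptype X A, ∃ p ∈ F, p ≤ q := by
  choose lab B hB hxB hBU using fun x : A => hb x U (hU.mem_nhds (hAU x.2))
  obtain ⟨t, hcover⟩ :=
    hA.elim_nhds_subcover' (fun x hx => B ⟨x, hx⟩) fun x hx => (hB _).1.mem_nhds (hxB _)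
  refine ⟨lab '' t, t.finite_toSet.image lab, ?_, ?_⟩
  · rintro _ ⟨x, -, rfl⟩
    exact ⟨B x, hB x, hBU x, x, hxB x, x.2⟩
  · rintro q ⟨y, hyA, hyq⟩
    obtain ⟨x, hx, hyB⟩ := mem_iUnion₂.1 (hcover hyA)
    exact ⟨lab x, mem_image_of_mem lab hx, (hB x).le_of_inter_nonempty ⟨y, hyB, hyq⟩⟩

lemma HasTrimNhdBasis.exists_finite_subset_ptype_le (hb : HasTrimNhdBasis X) {A : Set W}
    (hA : IsCompact A) (hA' : IsOpen A ∨ IsLowerSet (ptype X A)) :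
    ∃ F : Set P, F.Finite ∧ F ⊆ ptype X A ∧ ∀ q ∈ ptype X A, ∃ p ∈ F, p ≤ q := by
  rcases hA' with hopen | hlower
  · obtain ⟨F, hF, hlab, hle⟩ := hb.exists_finite_labels_le hA hopen subset_rfl
    refine ⟨F, hF, fun p hp => ?_, hle⟩
    obtain ⟨C, hC, hCA, -⟩ := hlab p hp
    exact ptype_mono hCA hC.self_mem_ptype
  · obtain ⟨F, hF, -, hle⟩ := hb.exists_finite_labels_le hA isOpen_univ (subset_univ A)
    refine ⟨F ∩ ptype X A, hF.inter_of_left _, inter_subset_right, fun q hq => ?_⟩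
    obtain ⟨p, hp, hpq⟩ := hle q hq
    exact ⟨p, ⟨hp, hlower hpq hq⟩, hpq⟩

lemma HasTrimNhdBasis.subset_closure_of_le (hb : HasTrimNhdBasis X) {p r : P} (hrp : r ≤ p) :
    X r ⊆ closure (X p) := by
  refine fun z hz => mem_closure_iff_nhds.2 fun O hO => ?_
  obtain ⟨q, B, hB, hzB, hBO⟩ := hb z O hO
  have hqp : q ≤ p := (hB.le_of_inter_nonempty ⟨z, hzB, hz⟩).trans hrp
  exact (hB.mem_ptype_iff.2 hqp).mono (inter_subset_inter_left _ hBO)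

lemma HasTrimNhdBasis.exists_isFinFoundation_singleton (hb : HasTrimNhdBasis X)
    (hX : ∀ p, (X p).Nonempty) {p : P} (hp : IsCompact (closure (X p))) :
    ∃ F : Set P, IsFinFoundation {p} F := by
  obtain ⟨F, hF, hlab, hle⟩ := hb.exists_finite_labels_le hp isOpen_univ (subset_univ _)
  refine ⟨F, hF, ?_, fun f hf => ?_⟩
  · rintro q rfl r hrq
    obtain ⟨z, hz⟩ := hX r
    exact hle r ⟨z, hb.subset_closure_of_le hrq hz, hz⟩
  · obtain ⟨C, hC, -, y, hyC, hy⟩ := hlab f hf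
    exact ⟨p, rfl, hC.le_of_inter_nonempty (mem_closure_iff.1 hy C hC.1 hyC)⟩

lemma HasTrimNhdBasis.exists_isFinFoundation_univ [CompactSpace W] (hb : HasTrimNhdBasis X)
    (hX : ∀ p, (X p).Nonempty) : ∃ F : Set P, IsFinFoundation univ F := by
  obtain ⟨F, hF, -, hle⟩ := hb.exists_finite_subset_ptype_le isCompact_univ (.inl isOpen_univ)
  rw [ptype_univ hX] at hle
  exact ⟨F, hF, fun _ _ r _ => hle r (mem_univ r), fun p _ => ⟨p, mem_univ p, le_rfl⟩⟩

/-- For a semi-trim `P`-partition of `W`: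
(i) if `A` is compact and is open or has lower-set type, then some finite `F ⊆ T(A)` lies
below all of `T(A)`; (ii) if `W` is compact then `P` has a finite foundation; (iii) if
`closure (X p)` is compact then `{p}` has a finite foundation (`p ∈ P_Δ`). -/
theorem compactness_of_semiTrim (X : P → Set W) (h : IsSemiTrim X) :
    (∀ A : Set W, IsCompact A → (IsOpen A ∨ IsLowerSet (ptype X A)) →
      ∃ F : Set P, F.Finite ∧ F ⊆ ptype X A ∧ ∀ q ∈ ptype X A, ∃ p ∈ F, p ≤ q) ∧
    (CompactSpace W → ∃ F : Set P, IsFinFoundation univ F) ∧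
    (∀ p : P, IsCompact (closure (X p)) → ∃ F : Set P, IsFinFoundation {p} F) := by
  have hb := h.hasTrimNhdBasis
  exact ⟨fun _ hA hA' => hb.exists_finite_subset_ptype_le hA hA',
    fun _ => hb.exists_isFinFoundation_univ h.nonempty,
    fun _ hp => hb.exists_isFinFoundation_singleton h.nonempty hp⟩
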